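/- arXiv:1202.3396 — 4 statements merged into one kernel-verified Lean document; each statement's English description precedes it below -/
import Mathlib

section
/- In a reduced root system Φ, if α, β, γ ∈ Φ are such that α+β, α+γ, and α+β+γ are roots but β+γ is neither a root nor zero, then the only triple (i,j,k) of positive integers with iα + jβ + kγ = α + β + γ is (1,1,1). -/
/-- In a reduced root system `Φ` (proportional roots have ratio `±1`), if
`α, β, γ ∈ Φ` are such that `α+β`, `α+γ` and `α+β+γ` are roots but `β+γ` is
neither a root nor zero, then the only triple `(i,j,k)` of positive integers
with `iα + jβ + kγ = α + β + γ` is `(1,1,1)`. The hypothesis `hbour` is the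
standard fact (Bourbaki Ch. VI §1 Prop. 19) that if a positive multiple of a
root is a positive integer combination of `β` and `γ`, then `β+γ` is a root. -/
theorem stmt16 {V : Type*} [AddCommGroup V] [Module ℝ V] (Φ : Set V)
    (h0 : (0 : V) ∉ Φ)
    (hsymm : ∀ δ ∈ Φ, -δ ∈ Φ)
    (hred : ∀ δ ∈ Φ, ∀ ε ∈ Φ, ∀ c : ℝ, δ = c • ε → c = 1 ∨ c = -1)
    (α β γ : V) (hα : α ∈ Φ) (hβ : β ∈ Φ) (hγ : γ ∈ Φ)
    (hαβ : α + β ∈ Φ) (hαγ : α + γ ∈ Φ) (hαβγ : α + β + γ ∈ Φ)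
    (hβγ : β + γ ∉ Φ) (hβγ0 : β + γ ≠ 0)
    (hindαβ : ∀ c : ℝ, α ≠ c • β) (hindαγ : ∀ c : ℝ, α ≠ c • γ)
    (hbour : ∀ δ ∈ Φ, ∀ m a b : ℕ, 0 < m → 0 < a → 0 < b →
      (m : ℝ) • δ = (a : ℝ) • β + (b : ℝ) • γ → β + γ ∈ Φ) :
    ∀ i j k : ℕ, 0 < i → 0 < j → 0 < k →
      (i : ℝ) • α + (j : ℝ) • β + (k : ℝ) • γ = α + β + γ →
      i = 1 ∧ j = 1 ∧ k = 1 := by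

  intro i j k hi hj hk heq
  -- Rearranged equation
  have key : ((i:ℝ)-1) • α + ((j:ℝ)-1) • β + ((k:ℝ)-1) • γ = 0 := by
    have h := heq
    rw [show α + β + γ = (1:ℝ) • α + (1:ℝ) • β + (1:ℝ) • γ by simp] at h
    have : ((i:ℝ) • α + (j:ℝ) • β + (k:ℝ) • γ) - ((1:ℝ) • α + (1:ℝ) • β + (1:ℝ) • γ) = 0 := by
      rw [h]; abel
    calc ((i:ℝ)-1) • α + ((j:ℝ)-1) • β + ((k:ℝ)-1) • γ
        = ((i:ℝ) • α + (j:ℝ) • β + (k:ℝ) • γ) - ((1:ℝ) • α + (1:ℝ) • β + (1:ℝ) • γ) := by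
          simp [sub_smul]; abel
      _ = 0 := this
  have hα0 : α ≠ 0 := fun h => h0 (h ▸ hα)
  have hβ0 : β ≠ 0 := fun h => h0 (h ▸ hβ)
  have hγ0 : γ ≠ 0 := fun h => h0 (h ▸ hγ)
  rcases Nat.lt_or_ge i 2 with hi2 | hi2
  · -- i = 1
    have hie : i = 1 := by omega
    subst hie
    simp only [Nat.cast_one, sub_self, zero_smul, zero_add] at key
    rcases Nat.lt_or_ge j 2 with hj2 | hj2
    · have hje : j = 1 := by omega
      subst hje
      simp only [Nat.cast_one, sub_self, zero_smul, zero_add] at key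
      have : (k:ℝ) - 1 = 0 ∨ γ = 0 := smul_eq_zero.mp key
      rcases this with h | h
      · have : (k:ℝ) = 1 := by linarith
        exact ⟨rfl, rfl, by exact_mod_cast this⟩
      · exact absurd h hγ0
    · exfalso
      rcases Nat.lt_or_ge k 2 with hk2 | hk2
      · have hke : k = 1 := by omega
        subst hke
        simp only [Nat.cast_one, sub_self, zero_smul, add_zero] at key
        have : (j:ℝ) - 1 = 0 ∨ β = 0 := smul_eq_zero.mp key
        rcases this with h | h
        · have : (2:ℝ) ≤ (j:ℝ) := by exact_mod_cast hj2
          linarith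
        · exact hβ0 h
      · -- j ≥ 2, k ≥ 2 : β = c • γ with c < 0
        have hjpos : (0:ℝ) < (j:ℝ) - 1 := by
          have : (2:ℝ) ≤ (j:ℝ) := by exact_mod_cast hj2
          linarith
        have hkpos : (0:ℝ) < (k:ℝ) - 1 := by
          have : (2:ℝ) ≤ (k:ℝ) := by exact_mod_cast hk2
          linarith
        have hc : β = (-(((k:ℝ)-1)/((j:ℝ)-1))) • γ := by
          have h1 : ((j:ℝ)-1) • β = -(((k:ℝ)-1) • γ) := by
            rw [eq_neg_iff_add_eq_zero]; exact key
          have := congrArg (fun v => (((j:ℝ)-1)⁻¹) • v) h1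
          simp only [smul_smul, smul_neg] at this
          rw [inv_mul_cancel₀ (ne_of_gt hjpos), one_smul] at this
          rw [this, neg_smul, div_eq_inv_mul]
        rcases hred β hβ γ hγ _ hc with h | h
        · rw [h] at hc
          have : (0:ℝ) < ((k:ℝ)-1)/((j:ℝ)-1) := div_pos hkpos hjpos
          linarith
        · rw [h] at hc
          apply hβγ0
          rw [hc]; simp
  · -- i ≥ 2
    exfalso
    have hipos : (0:ℝ) < (i:ℝ) - 1 := by
      have : (2:ℝ) ≤ (i:ℝ) := by exact_mod_cast hi2
      linarith
    rcases Nat.lt_or_ge j 2 with hj2 | hj2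
    · have hje : j = 1 := by omega
      subst hje
      simp only [Nat.cast_one, sub_self, zero_smul, add_zero, zero_add] at key
      rcases Nat.lt_or_ge k 2 with hk2 | hk2
      · have hke : k = 1 := by omega
        subst hke
        simp only [Nat.cast_one, sub_self, zero_smul, add_zero] at key
        rcases smul_eq_zero.mp key with h | h
        · linarith
        · exact hα0 h
      · -- α = c • γ
        have hkpos : (0:ℝ) < (k:ℝ) - 1 := by
          have : (2:ℝ) ≤ (k:ℝ) := by exact_mod_cast hk2
          linarith
        apply hindαγ (-(((k:ℝ)-1)/((i:ℝ)-1)))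
        have h1 : ((i:ℝ)-1) • α = -(((k:ℝ)-1) • γ) := by
          rw [eq_neg_iff_add_eq_zero]; exact key
        have := congrArg (fun v => (((i:ℝ)-1)⁻¹) • v) h1
        simp only [smul_smul, smul_neg] at this
        rw [inv_mul_cancel₀ (ne_of_gt hipos), one_smul] at this
        rw [this, neg_smul, div_eq_inv_mul]
    · rcases Nat.lt_or_ge k 2 with hk2 | hk2
      · have hke : k = 1 := by omega
        subst hke
        simp only [Nat.cast_one, sub_self, zero_smul, add_zero] at key
        have hjpos : (0:ℝ) < (j:ℝ) - 1 := by
          have : (2:ℝ) ≤ (j:ℝ) := by exact_mod_cast hj2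
          linarith
        apply hindαβ (-(((j:ℝ)-1)/((i:ℝ)-1)))
        have h1 : ((i:ℝ)-1) • α = -(((j:ℝ)-1) • β) := by
          rw [eq_neg_iff_add_eq_zero]; exact key
        have := congrArg (fun v => (((i:ℝ)-1)⁻¹) • v) h1
        simp only [smul_smul, smul_neg] at this
        rw [inv_mul_cancel₀ (ne_of_gt hipos), one_smul] at this
        rw [this, neg_smul, div_eq_inv_mul]
      · -- all ≥ 2 : use hbour with -α
        apply hβγ
        apply hbour (-α) (hsymm α hα) (i-1) (j-1) (k-1) (by omega) (by omega) (by omega)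
        have ci : ((i-1:ℕ):ℝ) = (i:ℝ) - 1 := by
          push_cast [Nat.cast_sub (by omega : 1 ≤ i)]; ring
        have cj : ((j-1:ℕ):ℝ) = (j:ℝ) - 1 := by
          push_cast [Nat.cast_sub (by omega : 1 ≤ j)]; ring
        have ck : ((k-1:ℕ):ℝ) = (k:ℝ) - 1 := by
          push_cast [Nat.cast_sub (by omega : 1 ≤ k)]; ring
        rw [ci, cj, ck]
        linear_combination (norm := module) -key
end

section
/- Let Φ be a root system of type B₂ with short root α and long root β generating it, and let (c_{γ,δ,i,j}) be structure constants (in a commutative ring where 2 is invertible) satisfying the Chevalley commutator formula [u_γ(λ), u_δ(μ)] = ∏ u_{iγ+jδ}(c_{γ,δ,i,j} λ^i μ^j). Then c_{β,α,2} = -c_{α,β,2} and c_{α,β,2} = (1/2)·c_{α,β}·c_{α,α+β}. -/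
open scoped commutatorElement

/-!
The first identity comes from `⁅uβ 1, uα 1⁆ = ⁅uα 1, uβ 1⁆⁻¹`. For the second, expand
`⁅uα (1 + 1), uβ 1⁆ = uα 1 * ⁅uα 1, uβ 1⁆ * (uα 1)⁻¹ * ⁅uα 1, uβ 1⁆`: conjugating
`uab cαβ` by `uα 1` contributes the extra factor `u2ab (cααβ * cαβ)`, while the
commutator formula itself gives `u2ab (4 * cαβ2)`. Since `(x, y) ↦ uab x * u2ab y` is injective,
the exponents of `u2ab` can be compared.
-/

section RootSubgroups

variable {R G : Type*} [AddGroup R] [Group G]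

theorem map_zero_of_map_add {f : R → G} (hf : ∀ x y, f (x + y) = f x * f y) : f 0 = 1 :=
  mul_eq_left.mp (by rw [← hf 0 0, add_zero])

theorem map_neg_of_map_add {f : R → G} (hf : ∀ x y, f (x + y) = f x * f y) (x : R) :
    f (-x) = (f x)⁻¹ :=
  eq_inv_of_mul_eq_one_left (by rw [← hf, neg_add_cancel, map_zero_of_map_add hf])

variable {u v : R → G} (hu : ∀ x y, u (x + y) = u x * u y) (hv : ∀ x y, v (x + y) = v x * v y)
include hu hv

theorem map_mul_map_mul_map_mul_map (huv : ∀ x y, u x * v y = v y * u x) (x y x' y' : R) :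
    u x * v y * (u x' * v y') = u (x + x') * v (y + y') := by
  rw [hu, hv, mul_assoc, ← mul_assoc (v y), ← huv, mul_assoc, mul_assoc]

theorem inv_map_mul_map (huv : ∀ x y, u x * v y = v y * u x) (x y : R) :
    (u x * v y)⁻¹ = u (-x) * v (-y) := by
  rw [mul_inv_rev, ← map_neg_of_map_add hu, ← map_neg_of_map_add hv, huv]

theorem eq_and_eq_of_map_mul_map_eq (htriv : ∀ x y, u x * v y = 1 → x = 0 ∧ y = 0)
    {p q r s : R} (h : u p * v q = u r * v s) : p = r ∧ q = s := by
  have hsplit : u (-r + p) = v (s + -q) := by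
    rw [hu, hv, map_neg_of_map_add hu, map_neg_of_map_add hv, inv_mul_eq_iff_eq_mul,
      ← mul_assoc, eq_mul_inv_iff_mul_eq, h]
  have hone : u (-r + p) * v (q + -s) = 1 := by
    rw [hsplit, ← hv, add_assoc, neg_add_cancel_left, add_neg_cancel, map_zero_of_map_add hv]
  obtain ⟨hpr, hqs⟩ := htriv _ _ hone
  exact ⟨(neg_add_eq_zero.mp hpr).symm, add_neg_eq_zero.mp hqs⟩

omit hu in
theorem conj_map_mul_map {a : G} {x y z : R} (huv : ∀ x y, u x * v y = v y * u x)
    (hz : ⁅a, u x⁆ = v z) (hy : Commute a (v y)) :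
    a * (u x * v y) * a⁻¹ = u x * v (z + y) := by
  have hconj : a * u x * a⁻¹ = v z * u x := by
    rw [← hz, commutatorElement_def, inv_mul_cancel_right]
  calc a * (u x * v y) * a⁻¹ = a * u x * a⁻¹ * v y := by
        rw [mul_assoc, mul_assoc, hy.symm.inv_right.eq, ← mul_assoc, ← mul_assoc]
    _ = u x * v (z + y) := by rw [hconj, ← huv, mul_assoc, ← hv]

end RootSubgroups

theorem stmt17_general {R : Type*} [CommRing R] {G : Type*} [Group G]
    (uα uβ uab u2ab : R → G)
    (hαhom : ∀ x y, uα (x + y) = uα x * uα y)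
    (habhom : ∀ x y, uab (x + y) = uab x * uab y)
    (h2abhom : ∀ x y, u2ab (x + y) = u2ab x * u2ab y)
    (hcomm1 : ∀ x y, uab x * u2ab y = u2ab y * uab x)
    (hcomm2 : ∀ x y, uα x * u2ab y = u2ab y * uα x)
    (htriv : ∀ x y, uab x * u2ab y = 1 → x = 0 ∧ y = 0)
    (cαβ cαβ2 cβα cβα2 cααβ : R)
    (hαβ : ∀ l m : R, ⁅uα l, uβ m⁆ = uab (cαβ * l * m) * u2ab (cαβ2 * l ^ 2 * m))
    (hβα : ∀ l m : R, ⁅uβ l, uα m⁆ = uab (cβα * l * m) * u2ab (cβα2 * l * m ^ 2))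
    (hααβ : ∀ l m : R, ⁅uα l, uab m⁆ = u2ab (cααβ * l * m)) :
    cβα2 = -cαβ2 ∧ 2 * cαβ2 = cαβ * cααβ := by
  have hbase : ⁅uα 1, uβ 1⁆ = uab cαβ * u2ab cαβ2 := by simpa using hαβ 1 1
  have hswap : uab (cβα * 1 * 1) * u2ab (cβα2 * 1 * 1 ^ 2) = uab (-cαβ) * u2ab (-cαβ2) := by
    rw [← hβα, ← commutatorElement_inv, hbase, inv_map_mul_map habhom h2abhom hcomm1]
  have hdouble :
      ⁅uα (1 + 1), uβ 1⁆ = uab (cαβ + cαβ) * u2ab (cααβ * 1 * cαβ + cαβ2 + cαβ2) := by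
    rw [hαhom, commutatorElement_mul_left_eq_conj_mul, hbase,
      conj_map_mul_map h2abhom hcomm1 (hααβ 1 cαβ) (hcomm2 1 cαβ2),
      map_mul_map_mul_map_mul_map habhom h2abhom hcomm1]
  obtain ⟨-, hneg⟩ := eq_and_eq_of_map_mul_map_eq habhom h2abhom htriv hswap
  obtain ⟨-, hsquare⟩ :=
    eq_and_eq_of_map_mul_map_eq habhom h2abhom htriv ((hαβ (1 + 1) 1).symm.trans hdouble)
  exact ⟨by linear_combination hneg, by linear_combination hsquare⟩

/-- Structure constants in type `B₂`: `α` short, `β` long, with root subgroups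
parameterized by homomorphisms `uα, uβ, uab (= u_{α+β}), u2ab (= u_{2α+β})`
from `(R,+)` to a group `G`, satisfying the Chevalley commutator formulas with
constants `c_{α,β}, c_{α,β,2}, c_{β,α}, c_{β,α,2}, c_{α,α+β}`. Then
`c_{β,α,2} = -c_{α,β,2}` and `c_{α,β,2} = (1/2)·c_{α,β}·c_{α,α+β}`
(i.e. `2·c_{α,β,2} = c_{α,β}·c_{α,α+β}`, `2` being invertible in `R`). -/
theorem stmt17 {R : Type*} [CommRing R] {G : Type*} [Group G]
    (h2 : IsUnit (2 : R))
    (uα uβ uab u2ab : R → G)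
    (hαhom : ∀ x y, uα (x + y) = uα x * uα y)
    (hβhom : ∀ x y, uβ (x + y) = uβ x * uβ y)
    (habhom : ∀ x y, uab (x + y) = uab x * uab y)
    (h2abhom : ∀ x y, u2ab (x + y) = u2ab x * u2ab y)
    (hcomm1 : ∀ x y, uab x * u2ab y = u2ab y * uab x)
    (hcomm2 : ∀ x y, uα x * u2ab y = u2ab y * uα x)
    (htriv : ∀ x y, uab x * u2ab y = 1 → x = 0 ∧ y = 0)
    (cαβ cαβ2 cβα cβα2 cααβ : R)
    (hαβ : ∀ l m : R, ⁅uα l, uβ m⁆ = uab (cαβ * l * m) * u2ab (cαβ2 * l ^ 2 * m))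
    (hβα : ∀ l m : R, ⁅uβ l, uα m⁆ = uab (cβα * l * m) * u2ab (cβα2 * l * m ^ 2))
    (hααβ : ∀ l m : R, ⁅uα l, uab m⁆ = u2ab (cααβ * l * m)) :
    cβα2 = -cαβ2 ∧ 2 * cαβ2 = cαβ * cααβ :=
  stmt17_general uα uβ uab u2ab hαhom habhom h2abhom hcomm1 hcomm2 htriv cαβ cαβ2 cβα cβα2 cααβ hαβ
    hβα hααβ
end

section
/- Uniqueness of Chevalley constants up to rescaling in type A₂: if (c_{γ,δ}) and (c'_{γ,δ}) are two families of invertible structure constants on the six roots of an A₂ system satisfying c_{γ,δ} = c_{δ,-γ-δ} = c_{-γ-δ,γ} (cyclic invariance) and c_{γ,δ}·c_{-γ,-δ} = -1 for all pairs γ,δ of roots with γ+δ a root, then there exist invertible constants (N_γ) with N_{-γ} = N_γ⁻¹ such that c'_{γ,δ} = (N_γ N_δ / N_{γ+δ})·c_{γ,δ} for all such pairs. -/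
lemma stmt18_aux {R : Type*} [CommRing R]
    (c : ℤ × ℤ → ℤ × ℤ → Rˣ)
    (hanti : ∀ γ ∈ ({(1, 0), (0, 1), (1, 1), (-1, 0), (0, -1), (-1, -1)} : Set (ℤ×ℤ)),
      ∀ δ ∈ ({(1, 0), (0, 1), (1, 1), (-1, 0), (0, -1), (-1, -1)} : Set (ℤ×ℤ)),
      γ + δ ∈ ({(1, 0), (0, 1), (1, 1), (-1, 0), (0, -1), (-1, -1)} : Set (ℤ×ℤ)) → c δ γ = -c γ δ)
    (hcyc : ∀ γ ∈ ({(1, 0), (0, 1), (1, 1), (-1, 0), (0, -1), (-1, -1)} : Set (ℤ×ℤ)),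
      ∀ δ ∈ ({(1, 0), (0, 1), (1, 1), (-1, 0), (0, -1), (-1, -1)} : Set (ℤ×ℤ)),
      γ + δ ∈ ({(1, 0), (0, 1), (1, 1), (-1, 0), (0, -1), (-1, -1)} : Set (ℤ×ℤ)) →
      c γ δ = c δ (-(γ + δ)) ∧ c γ δ = c (-(γ + δ)) γ)
    (hneg : ∀ γ ∈ ({(1, 0), (0, 1), (1, 1), (-1, 0), (0, -1), (-1, -1)} : Set (ℤ×ℤ)),
      ∀ δ ∈ ({(1, 0), (0, 1), (1, 1), (-1, 0), (0, -1), (-1, -1)} : Set (ℤ×ℤ)),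
      γ + δ ∈ ({(1, 0), (0, 1), (1, 1), (-1, 0), (0, -1), (-1, -1)} : Set (ℤ×ℤ)) → c γ δ * c (-γ) (-δ) = -1) :
    c (0,1) (1,0) = -c (1,0) (0,1) ∧
    c (0,1) (-1,-1) = c (1,0) (0,1) ∧
    c (-1,-1) (1,0) = c (1,0) (0,1) ∧
    c (-1,-1) (0,1) = -c (1,0) (0,1) ∧
    c (1,0) (-1,-1) = -c (1,0) (0,1) ∧
    c (-1,0) (0,-1) = -(c (1,0) (0,1))⁻¹ ∧
    c (0,-1) (-1,0) = (c (1,0) (0,1))⁻¹ ∧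
    c (-1,0) (1,1) = (c (1,0) (0,1))⁻¹ ∧
    c (1,1) (-1,0) = -(c (1,0) (0,1))⁻¹ ∧
    c (0,-1) (1,1) = -(c (1,0) (0,1))⁻¹ ∧
    c (1,1) (0,-1) = (c (1,0) (0,1))⁻¹ := by
  set S : Set (ℤ×ℤ) := {(1, 0), (0, 1), (1, 1), (-1, 0), (0, -1), (-1, -1)} with hS
  have m1 : ((1,0):ℤ×ℤ) ∈ S := by (norm_num [hS] <;> decide)
  have m2 : ((0,1):ℤ×ℤ) ∈ S := by (norm_num [hS] <;> decide)
  have m3 : ((1,1):ℤ×ℤ) ∈ S := by (norm_num [hS] <;> decide)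
  have m4 : ((-1,0):ℤ×ℤ) ∈ S := by (norm_num [hS] <;> decide)
  have m5 : ((0,-1):ℤ×ℤ) ∈ S := by (norm_num [hS] <;> decide)
  have m6 : ((-1,-1):ℤ×ℤ) ∈ S := by (norm_num [hS] <;> decide)
  have s12 : ((1,0):ℤ×ℤ) + (0,1) = (1,1) := by decide
  have s16 : ((1,0):ℤ×ℤ) + (-1,-1) = (0,-1) := by decide
  have s26 : ((0,1):ℤ×ℤ) + (-1,-1) = (-1,0) := by decide
  have n1 : -((1,0):ℤ×ℤ) = (-1,0) := by decide
  have n2 : -((0,1):ℤ×ℤ) = (0,-1) := by decide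
  have n3 : -((1,1):ℤ×ℤ) = (-1,-1) := by decide
  have n6 : -((-1,-1):ℤ×ℤ) = (1,1) := by decide
  -- h1
  have h1 : c (0,1) (1,0) = -c (1,0) (0,1) := by
    have := hanti (1,0) m1 (0,1) m2 (by rw [s12]; exact m3); exact this
  have hc := hcyc (1,0) m1 (0,1) m2 (by rw [s12]; exact m3)
  rw [s12, n3] at hc
  have h2 : c (0,1) (-1,-1) = c (1,0) (0,1) := hc.1.symm
  have h3 : c (-1,-1) (1,0) = c (1,0) (0,1) := hc.2.symm
  have h4 : c (-1,-1) (0,1) = -c (1,0) (0,1) := by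
    have := hanti (0,1) m2 (-1,-1) m6 (by rw [s26]; exact m4)
    rw [this, h2]
  have h5 : c (1,0) (-1,-1) = -c (1,0) (0,1) := by
    have := hanti (-1,-1) m6 (1,0) m1 (by rw [add_comm, s16]; exact m5)
    rw [this, h3]
  have key : ∀ a b : Rˣ, a * b = -1 → b = -a⁻¹ := by
    intro a b hab
    have : a⁻¹ * (a * b) = a⁻¹ * (-1) := by rw [hab]
    rwa [← mul_assoc, inv_mul_cancel, one_mul, mul_neg_one] at this
  have h6 : c (-1,0) (0,-1) = -(c (1,0) (0,1))⁻¹ := by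
    have := hneg (1,0) m1 (0,1) m2 (by rw [s12]; exact m3)
    rw [n1, n2] at this; exact key _ _ this
  have h7 : c (0,-1) (-1,0) = (c (1,0) (0,1))⁻¹ := by
    have := hanti (-1,0) m4 (0,-1) m5 (by (norm_num [hS] <;> decide))
    rw [this, h6, neg_neg]
  have h8 : c (-1,0) (1,1) = (c (1,0) (0,1))⁻¹ := by
    have := hneg (1,0) m1 (-1,-1) m6 (by rw [s16]; exact m5)
    rw [n1, n6, h5] at this
    have := key _ _ this
    rw [this, neg_inv, neg_neg]
  have h9 : c (1,1) (-1,0) = -(c (1,0) (0,1))⁻¹ := by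
    have := hanti (-1,0) m4 (1,1) m3 (by (norm_num [hS] <;> decide))
    rw [this, h8]
  have h10 : c (0,-1) (1,1) = -(c (1,0) (0,1))⁻¹ := by
    have := hneg (0,1) m2 (-1,-1) m6 (by rw [s26]; exact m4)
    rw [n2, n6, h2] at this
    exact key _ _ this
  have h11 : c (1,1) (0,-1) = (c (1,0) (0,1))⁻¹ := by
    have := hanti (0,-1) m5 (1,1) m3 (by (norm_num [hS] <;> decide))
    rw [this, h10, neg_neg]
  exact ⟨h1, h2, h3, h4, h5, h6, h7, h8, h9, h10, h11⟩


set_option maxHeartbeats 1000000 in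
/-- Uniqueness of Chevalley constants up to rescaling in type `A₂`: model the
six roots as `Φ = {±(1,0), ±(0,1), ±(1,1)} ⊆ ℤ × ℤ`. If `c` and `c'` are two
families of invertible structure constants satisfying antisymmetry, the cyclic
invariance `c γ δ = c δ (-(γ+δ)) = c (-(γ+δ)) γ` and `c γ δ · c (-γ) (-δ) = -1`
for all pairs of roots `γ, δ` with `γ+δ` a root, then there exist invertible
constants `N γ` with `N (-γ) = (N γ)⁻¹` such that
`c' γ δ = N γ · N δ · (N (γ+δ))⁻¹ · c γ δ` for all such pairs. -/
theorem stmt18 {R : Type*} [CommRing R]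
    (Φ : Set (ℤ × ℤ))
    (hΦ : Φ = {(1, 0), (0, 1), (1, 1), (-1, 0), (0, -1), (-1, -1)})
    (c c' : ℤ × ℤ → ℤ × ℤ → Rˣ)
    (hanti : ∀ γ ∈ Φ, ∀ δ ∈ Φ, γ + δ ∈ Φ → c δ γ = -c γ δ)
    (hcyc : ∀ γ ∈ Φ, ∀ δ ∈ Φ, γ + δ ∈ Φ →
      c γ δ = c δ (-(γ + δ)) ∧ c γ δ = c (-(γ + δ)) γ)
    (hneg : ∀ γ ∈ Φ, ∀ δ ∈ Φ, γ + δ ∈ Φ → c γ δ * c (-γ) (-δ) = -1)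
    (hanti' : ∀ γ ∈ Φ, ∀ δ ∈ Φ, γ + δ ∈ Φ → c' δ γ = -c' γ δ)
    (hcyc' : ∀ γ ∈ Φ, ∀ δ ∈ Φ, γ + δ ∈ Φ →
      c' γ δ = c' δ (-(γ + δ)) ∧ c' γ δ = c' (-(γ + δ)) γ)
    (hneg' : ∀ γ ∈ Φ, ∀ δ ∈ Φ, γ + δ ∈ Φ → c' γ δ * c' (-γ) (-δ) = -1) :
    ∃ N : ℤ × ℤ → Rˣ, (∀ γ ∈ Φ, N (-γ) = (N γ)⁻¹) ∧
      ∀ γ ∈ Φ, ∀ δ ∈ Φ, γ + δ ∈ Φ →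
        c' γ δ = N γ * N δ * (N (γ + δ))⁻¹ * c γ δ := by
  subst hΦ
  obtain ⟨g1, g2, g3, g4, g5, g6, g7, g8, g9, g10, g11⟩ := stmt18_aux c hanti hcyc hneg
  obtain ⟨k1, k2, k3, k4, k5, k6, k7, k8, k9, k10, k11⟩ := stmt18_aux c' hanti' hcyc' hneg'
  set u : Rˣ := c (1,0) (0,1) with hu
  set u' : Rˣ := c' (1,0) (0,1) with hu'
  refine ⟨fun γ => if γ = (1,0) then u' * u⁻¹ else if γ = (-1,0) then (u' * u⁻¹)⁻¹ else 1,
    ?_, ?_⟩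
  · intro γ hγ
    simp only [Set.mem_insert_iff, Set.mem_singleton_iff] at hγ
    rcases hγ with h | h | h | h | h | h <;> subst h <;> norm_num [Prod.ext_iff]
  · intro γ hγ δ hδ hsum
    simp only [Set.mem_insert_iff, Set.mem_singleton_iff] at hγ hδ
    rcases hγ with h | h | h | h | h | h <;> subst h <;>
      rcases hδ with h | h | h | h | h | h <;> subst h <;>
      first
        | (exfalso; revert hsum; clear * -; norm_num [Prod.ext_iff]; done)
        | (simp only [g1, g2, g3, g4, g5, g6, g7, g8, g9, g10, g11,
            k1, k2, k3, k4, k5, k6, k7, k8, k9, k10, k11, ← hu, ← hu']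
           norm_num [mul_neg, neg_mul, neg_inj, neg_neg, Prod.ext_iff]
           try group)
end

section
/- The quotients O₁/p₁³ and O₂/p₂³ of the rings of integers O₁ and O₂ of Q₃(√3) and Q₃(√6) by the cubes of their maximal ideals p₁ and p₂ are non-isomorphic rings, while the quotients O₁/p₁² and O₂/p₂² are isomorphic. -/
open Polynomial
open AdjoinRoot


noncomputable section Aux19

lemma root_sq19 {S : Type*} [CommRing S] (d : S) :
    (root (X ^ 2 - C d)) ^ 2 = of _ d := by
  have h := mk_self (f := (X ^ 2 - C d))
  rw [map_sub, map_pow, mk_X, mk_C, sub_eq_zero] at h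
  exact h

lemma isUnit_two19 : IsUnit (2 : ℤ_[3]) := by
  rw [PadicInt.isUnit_iff]
  refine le_antisymm (PadicInt.norm_le_one _) ?_
  by_contra h
  push_neg at h
  rw [show (2 : ℤ_[3]) = ((2 : ℤ) : ℤ_[3]) by norm_cast,
    PadicInt.norm_int_lt_one_iff_dvd] at h
  norm_num at h

def half19 : ℤ_[3] := ((isUnit_two19.unit⁻¹ : ℤ_[3]ˣ) : ℤ_[3])

lemma six_mul_half19 : (6 : ℤ_[3]) * half19 = 3 := by
  have h : (2 : ℤ_[3]) * half19 = 1 := by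
    have := isUnit_two19.unit.mul_inv
    rwa [IsUnit.unit_spec] at this
  calc (6 : ℤ_[3]) * half19 = 3 * ((2 : ℤ_[3]) * half19) := by ring
  _ = 3 := by rw [h, mul_one]

abbrev O19 (d : ℤ_[3]) := AdjoinRoot (X ^ 2 - C d)
abbrev I19 (d : ℤ_[3]) : Ideal (O19 d) := (Ideal.span {root (X ^ 2 - C d)}) ^ 2

lemma three_mem19 : (3 : O19 6) ∈ I19 6 := by
  rw [I19, Ideal.span_singleton_pow, Ideal.mem_span_singleton, root_sq19]
  refine ⟨of _ half19, ?_⟩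
  rw [← map_mul, six_mul_half19]; exact (map_ofNat _ 3).symm

lemma three_mem19' : (3 : O19 3) ∈ I19 3 := by
  rw [I19, Ideal.span_singleton_pow, Ideal.mem_span_singleton, root_sq19]
  exact ⟨1, by rw [mul_one]; exact (map_ofNat _ 3).symm⟩

lemma rootsq_mem19 (d : ℤ_[3]) : (root (X ^ 2 - C d)) ^ 2 ∈ I19 d :=
  Ideal.pow_mem_pow (Ideal.mem_span_singleton_self _) 2

lemma aeval_F19 :
    aeval (Ideal.Quotient.mkₐ ℤ_[3] (I19 6) (root (X ^ 2 - C (6 : ℤ_[3]))))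
      (X ^ 2 - C (3 : ℤ_[3])) = 0 := by
  rw [map_sub, map_pow, aeval_X, aeval_C, ← map_pow, root_sq19]
  rw [show (algebraMap ℤ_[3] (O19 6 ⧸ I19 6)) 3 =
      Ideal.Quotient.mkₐ ℤ_[3] (I19 6) (of _ 3) from rfl, ← map_sub]
  rw [show (of (X ^ 2 - C (6:ℤ_[3]))) 6 - (of (X ^ 2 - C (6:ℤ_[3]))) 3
      = of _ 3 by rw [← map_sub]; norm_num]
  have : (of (X ^ 2 - C (6:ℤ_[3]))) 3 = (3 : O19 6) := map_ofNat _ 3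
  rw [this]
  exact Ideal.Quotient.eq_zero_iff_mem.2 three_mem19

lemma aeval_G19 :
    aeval (Ideal.Quotient.mkₐ ℤ_[3] (I19 3) (root (X ^ 2 - C (3 : ℤ_[3]))))
      (X ^ 2 - C (6 : ℤ_[3])) = 0 := by
  rw [map_sub, map_pow, aeval_X, aeval_C, ← map_pow, root_sq19]
  rw [show (algebraMap ℤ_[3] (O19 3 ⧸ I19 3)) 6 =
      Ideal.Quotient.mkₐ ℤ_[3] (I19 3) (of _ 6) from rfl, ← map_sub]
  rw [show (of (X ^ 2 - C (3:ℤ_[3]))) 3 - (of (X ^ 2 - C (3:ℤ_[3]))) 6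
      = -(of _ 3) by rw [← map_sub, ← map_neg]; norm_num]
  have : (of (X ^ 2 - C (3:ℤ_[3]))) 3 = (3 : O19 3) := map_ofNat _ 3
  rw [this, map_neg, neg_eq_zero]
  exact Ideal.Quotient.eq_zero_iff_mem.2 three_mem19'

def F019 : O19 3 →ₐ[ℤ_[3]] (O19 6 ⧸ I19 6) :=
  liftAlgHom _ (Algebra.ofId _ _) (Ideal.Quotient.mkₐ ℤ_[3] (I19 6) (root (X ^ 2 - C (6 : ℤ_[3])))) aeval_F19

def G019 : O19 6 →ₐ[ℤ_[3]] (O19 3 ⧸ I19 3) :=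
  liftAlgHom _ (Algebra.ofId _ _) (Ideal.Quotient.mkₐ ℤ_[3] (I19 3) (root (X ^ 2 - C (3 : ℤ_[3])))) aeval_G19

lemma F019_root : F019 (root (X ^ 2 - C (3:ℤ_[3]))) =
    Ideal.Quotient.mkₐ ℤ_[3] (I19 6) (root (X ^ 2 - C (6 : ℤ_[3]))) := by
  exact liftAlgHom_root _ _ _ aeval_F19

lemma G019_root : G019 (root (X ^ 2 - C (6:ℤ_[3]))) =
    Ideal.Quotient.mkₐ ℤ_[3] (I19 3) (root (X ^ 2 - C (3 : ℤ_[3]))) := by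
  exact liftAlgHom_root _ _ _ aeval_G19

lemma F019_ker : ∀ a ∈ I19 3, F019 a = 0 := by
  intro a ha
  rw [I19, Ideal.span_singleton_pow, Ideal.mem_span_singleton] at ha
  obtain ⟨c, rfl⟩ := ha
  rw [map_mul, map_pow]
  rw [F019_root, ← map_pow]
  rw [show (Ideal.Quotient.mkₐ ℤ_[3] (I19 6)) (root (X ^ 2 - C (6:ℤ_[3])) ^ 2) = 0 from
    Ideal.Quotient.eq_zero_iff_mem.2 (rootsq_mem19 6)]
  rw [zero_mul]

lemma G019_ker : ∀ a ∈ I19 6, G019 a = 0 := by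
  intro a ha
  rw [I19, Ideal.span_singleton_pow, Ideal.mem_span_singleton] at ha
  obtain ⟨c, rfl⟩ := ha
  rw [map_mul, map_pow]
  rw [G019_root, ← map_pow]
  rw [show (Ideal.Quotient.mkₐ ℤ_[3] (I19 3)) (root (X ^ 2 - C (3:ℤ_[3])) ^ 2) = 0 from
    Ideal.Quotient.eq_zero_iff_mem.2 (rootsq_mem19 3)]
  rw [zero_mul]

def F19 : (O19 3 ⧸ I19 3) →ₐ[ℤ_[3]] (O19 6 ⧸ I19 6) :=
  Ideal.Quotient.liftₐ _ F019 F019_ker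

def G19 : (O19 6 ⧸ I19 6) →ₐ[ℤ_[3]] (O19 3 ⧸ I19 3) :=
  Ideal.Quotient.liftₐ _ G019 G019_ker

lemma F19_mk (a : O19 3) : F19 (Ideal.Quotient.mk _ a) = F019 a := by
  rfl

lemma G19_mk (a : O19 6) : G19 (Ideal.Quotient.mk _ a) = G019 a := by
  rfl

def equiv19 : (O19 3 ⧸ I19 3) ≃ₐ[ℤ_[3]] (O19 6 ⧸ I19 6) := by
  refine AlgEquiv.ofAlgHom F19 G19 ?_ ?_
  · refine Ideal.Quotient.algHom_ext ℤ_[3] (AdjoinRoot.algHom_ext ?_)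
    simp only [AlgHom.coe_comp, Function.comp_apply, AlgHom.id_apply,
      Ideal.Quotient.mkₐ_eq_mk]
    rw [G19_mk, G019_root, Ideal.Quotient.mkₐ_eq_mk, F19_mk, F019_root,
      Ideal.Quotient.mkₐ_eq_mk]
  · refine Ideal.Quotient.algHom_ext ℤ_[3] (AdjoinRoot.algHom_ext ?_)
    simp only [AlgHom.coe_comp, Function.comp_apply, AlgHom.id_apply,
      Ideal.Quotient.mkₐ_eq_mk]
    rw [F19_mk, F019_root, Ideal.Quotient.mkₐ_eq_mk, G19_mk, G019_root,
      Ideal.Quotient.mkₐ_eq_mk]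


noncomputable section AuxB

instance : Fact ((1:ℕ) < 9) := ⟨by norm_num⟩

abbrev U19 := AdjoinRoot (X ^ 2 - C (6 : ZMod 9))
abbrev u19 : U19 := root _


lemma key19 (Y V : (ZMod 9)[X]) :
    ¬ (X ^ 2 - C (6 : ZMod 9)) ∣ (Y ^ 2 - 3 - X ^ 3 * V) := by
  intro h
  set fq : (ZMod 9)[X] := X ^ 2 - C 6 with hfq
  have hm : fq.Monic := monic_X_pow_sub_C _ (by norm_num)
  have hdeg : fq.degree = 2 := degree_X_pow_sub_C (by norm_num) _
  set a := (Y %ₘ fq).coeff 0 with ha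
  set b := (Y %ₘ fq).coeff 1 with hb
  set c := (V %ₘ fq).coeff 0 with hc
  set d := (V %ₘ fq).coeff 1 with hd
  have hdle : ∀ W : (ZMod 9)[X], (W %ₘ fq).degree ≤ 1 := by
    intro W
    have h2 := degree_modByMonic_lt W hm
    rw [hdeg] at h2
    exact Order.le_of_lt_succ (by exact_mod_cast h2)
  have hYm : Y %ₘ fq = C b * X + C a := eq_X_add_C_of_degree_le_one (hdle Y)
  have hVm : V %ₘ fq = C d * X + C c := eq_X_add_C_of_degree_le_one (hdle V)
  have hYdvd : fq ∣ Y - (C b * X + C a) := by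
    rw [← hYm]
    exact ⟨Y /ₘ fq, by rw [modByMonic_eq_sub_mul_div Y fq]; ring⟩
  have hVdvd : fq ∣ V - (C d * X + C c) := by
    rw [← hVm]
    exact ⟨V /ₘ fq, by rw [modByMonic_eq_sub_mul_div V fq]; ring⟩
  have h2 : fq ∣ (C b * X + C a) ^ 2 - 3 - X ^ 3 * (C d * X + C c) := by
    have hsub : fq ∣ (Y ^ 2 - 3 - X ^ 3 * V) -
        ((C b * X + C a) ^ 2 - 3 - X ^ 3 * (C d * X + C c)) := by
      have e : (Y ^ 2 - 3 - X ^ 3 * V) -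
          ((C b * X + C a) ^ 2 - 3 - X ^ 3 * (C d * X + C c))
          = (Y - (C b * X + C a)) * (Y + (C b * X + C a))
            - X ^ 3 * (V - (C d * X + C c)) := by ring
      rw [e]
      exact dvd_sub (hYdvd.mul_right _) (hVdvd.mul_left _)
    have h3 := dvd_sub h hsub
    rwa [sub_sub_cancel] at h3
  set L : (ZMod 9)[X] := C (2*a*b - 6*c) * X + C (a^2 - 3 + 6*(b^2 - 6*d)) with hL
  have hLdvd : fq ∣ L := by
    have e : L = ((C b * X + C a) ^ 2 - 3 - X ^ 3 * (C d * X + C c))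
        - fq * (C (-d) * X ^ 2 + C (-c) * X + C (b ^ 2 - 6 * d)) := by
      simp only [hL, hfq, map_sub, map_add, map_mul, map_pow, map_neg, map_ofNat]
      ring
    rw [e]
    exact dvd_sub h2 (Dvd.intro _ rfl)
  have hdegL : L.degree < fq.degree := by
    rw [hdeg]
    exact lt_of_le_of_lt degree_linear_le (by norm_num)
  have hL0 : L = 0 := by
    by_contra h0
    exact hm.not_dvd_of_degree_lt h0 hdegL hLdvd
  have hc0 : a ^ 2 - 3 + 6 * (b ^ 2 - 6 * d) = 0 := by
    have h4 := congrArg (fun p => Polynomial.coeff p 0) hL0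
    rw [hL] at h4
    simpa [← map_pow] using h4
  have : ∀ x y w : ZMod 9, x ^ 2 - 3 + 6 * (y ^ 2 - 6 * w) ≠ 0 := by decide
  exact this a b d hc0

lemma key19' (y v : U19) : y ^ 2 - 3 ≠ u19 ^ 3 * v := by
  obtain ⟨Y, rfl⟩ := mk_surjective y
  obtain ⟨V, rfl⟩ := mk_surjective v
  intro h
  apply key19 Y V
  refine AdjoinRoot.mk_eq_zero.1 ?_
  have h3 : (AdjoinRoot.mk (X ^ 2 - C (6 : ZMod 9))) (3 : (ZMod 9)[X]) = 3 :=
    map_ofNat _ 3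
  rw [map_sub, map_sub, map_pow, map_mul, map_pow, mk_X, h3, h, sub_self]

end AuxB

noncomputable section AuxC

def phi19 : ℤ_[3] →+* U19 :=
  (AdjoinRoot.of (X ^ 2 - C (6 : ZMod 9))).comp
    ((ZMod.castHom (show (9:ℕ) ∣ 3^2 by norm_num) (ZMod 9)).comp (PadicInt.toZModPow 2))

lemma phi19_eval : Polynomial.eval₂ phi19 u19 (X ^ 2 - C (6 : ℤ_[3])) = 0 := by
  rw [eval₂_sub, eval₂_pow, eval₂_X, eval₂_C, root_sq19, sub_eq_zero]
  have h1 : (of (X ^ 2 - C (6:ZMod 9))) (6 : ZMod 9) = (6 : U19) := map_ofNat _ 6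
  have h2 : phi19 (6 : ℤ_[3]) = (6 : U19) := map_ofNat _ 6
  rw [h1, h2]

def Psi19 : O19 6 →+* U19 := AdjoinRoot.lift phi19 u19 phi19_eval

lemma Psi19_root : Psi19 (root (X ^ 2 - C (6 : ℤ_[3]))) = u19 :=
  AdjoinRoot.lift_root phi19_eval

end AuxC


set_option maxHeartbeats 1000000 in
set_option synthInstance.maxHeartbeats 400000 in

/-- The rings of integers of `ℚ₃(√3)` and `ℚ₃(√6)` are
`O₁ = ℤ₃[√3] = AdjoinRoot (X² - 3)` and `O₂ = ℤ₃[√6] = AdjoinRoot (X² - 6)`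
over `ℤ_[3]`, with maximal ideals `p₁ = (√3)`, `p₂ = (√6)`. The quotients
`O₁/p₁²` and `O₂/p₂²` are isomorphic rings, while `O₁/p₁³` and `O₂/p₂³` are
not isomorphic. -/
theorem stmt19 :
    Nonempty
      ((AdjoinRoot (X ^ 2 - C (3 : ℤ_[3])) ⧸
          (Ideal.span {AdjoinRoot.root (X ^ 2 - C (3 : ℤ_[3]))}) ^ 2) ≃+*
        (AdjoinRoot (X ^ 2 - C (6 : ℤ_[3])) ⧸
          (Ideal.span {AdjoinRoot.root (X ^ 2 - C (6 : ℤ_[3]))}) ^ 2)) ∧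
    IsEmpty
      ((AdjoinRoot (X ^ 2 - C (3 : ℤ_[3])) ⧸
          (Ideal.span {AdjoinRoot.root (X ^ 2 - C (3 : ℤ_[3]))}) ^ 3) ≃+*
        (AdjoinRoot (X ^ 2 - C (6 : ℤ_[3])) ⧸
          (Ideal.span {AdjoinRoot.root (X ^ 2 - C (6 : ℤ_[3]))}) ^ 3)) := by
  constructor
  · exact ⟨equiv19.toRingEquiv⟩
  · constructor
    intro e
    set x := Ideal.Quotient.mk ((Ideal.span {root (X ^ 2 - C (3 : ℤ_[3]))}) ^ 3)
      (root (X ^ 2 - C (3 : ℤ_[3]))) with hxdef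
    have hx : x ^ 2 = 3 := by
      rw [hxdef, ← map_pow, root_sq19,
        show ((of (X ^ 2 - C (3 : ℤ_[3]))) 3) = (3 : O19 3) from map_ofNat _ 3]
      exact map_ofNat _ 3
    have hy : (e x) ^ 2 = 3 := by rw [← map_pow, hx]; exact map_ofNat e 3
    obtain ⟨z, hz⟩ := Ideal.Quotient.mk_surjective (e x)
    have hmem : z ^ 2 - 3 ∈ (Ideal.span {root (X ^ 2 - C (6 : ℤ_[3]))}) ^ 3 := by
      rw [← Ideal.Quotient.eq_zero_iff_mem, map_sub, map_pow, hz,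
        show (Ideal.Quotient.mk ((Ideal.span {root (X ^ 2 - C (6 : ℤ_[3]))}) ^ 3))
          (3 : O19 6) = 3 from map_ofNat _ 3, hy, sub_self]
    rw [Ideal.span_singleton_pow, Ideal.mem_span_singleton] at hmem
    obtain ⟨w, hw⟩ := hmem
    have h5 := congrArg Psi19 hw
    rw [map_sub, map_pow, map_mul, map_pow, Psi19_root,
      show Psi19 (3 : O19 6) = 3 from map_ofNat _ 3] at h5
    exact key19' (Psi19 z) (Psi19 w) h5
end Aux19
end
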